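/- With φ as in the representation formula φ(x) = (e^ρ/2)(1 + e^{−2ρ}(1+‖∇ρ‖²))(1,x) + e^{−ρ}(0, −x + ∇ρ(x)), and η(x) := φ(x) − e^ρ(1,x), one has ⟨η(x), η(x)⟩ = 1 and ⟨φ(x), η(x)⟩ = 0 in the Minkowski inner product; that is, η maps into de Sitter space and is Minkowski-orthogonal to φ. -/
import Mathlib


open Finset

/-- The Minkowski inner product on `𝕃^{n+2} = ℝ × ℝ^{n+1}`. -/
def mink (n : ℕ) (u v : ℝ × (Fin (n + 1) → ℝ)) : ℝ :=
  -(u.1 * v.1) + ∑ i, u.2 i * v.2 i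

/-- For `φ` given by the representation formula and `η = φ − e^ρ(1,x)`, one has
`⟨η,η⟩ = 1` and `⟨φ,η⟩ = 0`: `η` is the de Sitter unit normal. -/
theorem stmt12 (n : ℕ) (ρ : ℝ) (x v : Fin (n + 1) → ℝ)
    (hx : ∑ i, (x i) ^ 2 = 1) (hxv : ∑ i, x i * v i = 0)
    (phi eta : ℝ × (Fin (n + 1) → ℝ))
    (hphi : phi =
      (Real.exp ρ / 2 * (1 + Real.exp (-(2 * ρ)) * (1 + ∑ i, (v i) ^ 2))) •
        ((1 : ℝ), x) + Real.exp (-ρ) • ((0 : ℝ), -x + v))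
    (heta : eta = phi - Real.exp ρ • ((1 : ℝ), x)) :
    mink n eta eta = 1 ∧ mink n phi eta = 0 := by
  have key : ∀ c d e f : ℝ,
      ∑ i, (c * x i + e * v i) * (d * x i + f * v i)
        = c * d + e * f * ∑ i, (v i) ^ 2 := by
    intro c d e f
    have h : ∀ i, (c * x i + e * v i) * (d * x i + f * v i)
        = c * d * (x i) ^ 2 + (c * f + d * e) * (x i * v i) + e * f * (v i) ^ 2 := by
      intro i; ring
    simp_rw [h]
    rw [Finset.sum_add_distrib, Finset.sum_add_distrib, ← Finset.mul_sum, ← Finset.mul_sum,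
      ← Finset.mul_sum, hx, hxv]
    ring
  set S := ∑ i, (v i) ^ 2 with hS
  set A := Real.exp ρ with hA
  set B := Real.exp (-ρ) with hB
  have hAB : A * B = 1 := by rw [hA, hB, ← Real.exp_add]; simp
  have hB2 : Real.exp (-(2 * ρ)) = B * B := by rw [hB, ← Real.exp_add]; ring_nf
  set a := A / 2 * (1 + Real.exp (-(2 * ρ)) * (1 + S)) with ha
  have hphi1 : phi.1 = a := by rw [hphi]; simp
  have hphi2 : ∀ i, phi.2 i = (a - B) * x i + B * v i := by
    intro i; rw [hphi]; simp [Prod.smul_def]; ring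
  have heta1 : eta.1 = a - A := by rw [heta]; simp [hphi1]
  have heta2 : ∀ i, eta.2 i = (a - B - A) * x i + B * v i := by
    intro i; rw [heta]; simp [hphi2 i]; ring
  constructor
  · show -(eta.1 * eta.1) + ∑ i, eta.2 i * eta.2 i = 1
    simp_rw [heta1, heta2]
    rw [key]
    rw [ha, hB2]
    linear_combination (1 - B * B * (1 + S)) * hAB
  · show -(phi.1 * eta.1) + ∑ i, phi.2 i * eta.2 i = 0
    simp_rw [hphi1, heta1, hphi2, heta2]
    rw [key]
    rw [ha, hB2]
    linear_combination (-(B * B * (1 + S))) * hAB
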